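/- Let a and b be coprime integers and let p be a prime. Then p divides the discriminant Δ of E_{C9}(a,b) and p does not divide the invariant c₄ of E_{C9}(a,b) if and only if p divides a·b·(a−b), or (p ≥ 7 and p divides (a² − ab + b²)·(a³ + 3a²b − 6ab² + b³)). -/
import Mathlib


/-- The parameterized Weierstrass curve `E_{C9}(a,b)`. -/
def EC9 (a b : ℤ) : WeierstrassCurve ℤ :=
  ⟨a ^ 3 + a * b ^ 2 - b ^ 3,
    a ^ 4 * b ^ 2 - 2 * a ^ 3 * b ^ 3 + 2 * a ^ 2 * b ^ 4 - a * b ^ 5,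
    a ^ 3 * (a ^ 4 * b ^ 2 - 2 * a ^ 3 * b ^ 3 + 2 * a ^ 2 * b ^ 4 - a * b ^ 5), 0, 0⟩

lemma EC9_Δ (a b : ℤ) : (EC9 a b).Δ =
    -(a * b * (a - b)) ^ 9 * (a ^ 2 - a * b + b ^ 2) ^ 3 *
      (a ^ 3 + 3 * a ^ 2 * b - 6 * a * b ^ 2 + b ^ 3) := by
  simp only [WeierstrassCurve.Δ, WeierstrassCurve.b₂, WeierstrassCurve.b₄,
    WeierstrassCurve.b₆, WeierstrassCurve.b₈, EC9]
  ring

lemma EC9_c4 (a b : ℤ) : (EC9 a b).c₄ =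
    b^12 - 12*a*b^11 + 54*a^2*b^10 - 128*a^3*b^9 + 189*a^4*b^8 - 180*a^5*b^7
      + 114*a^6*b^6 - 36*a^7*b^5 - 18*a^8*b^4 + 28*a^9*b^3 - 12*a^10*b^2 + a^12 := by
  simp only [WeierstrassCurve.c₄, WeierstrassCurve.b₂, WeierstrassCurve.b₄, EC9]
  ring

lemma bez4 (a b : ℤ) :
    (a - b) * (b^12 - 12*a*b^11 + 54*a^2*b^10 - 128*a^3*b^9 + 189*a^4*b^8 - 180*a^5*b^7
      + 114*a^6*b^6 - 36*a^7*b^5 - 18*a^8*b^4 + 28*a^9*b^3 - 12*a^10*b^2 + a^12)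
    + (10*b^11 - 3*a*b^10 + 53*a^2*b^9 - 126*a^3*b^8 + 138*a^4*b^7 - 105*a^5*b^6
      + 51*a^6*b^5 + 6*a^7*b^4 - 27*a^8*b^3 + 13*a^9*b^2 - a^11) * (a^2 - a*b + b^2)
    = 9 * b^13 := by ring

lemma bez5 (a b : ℤ) :
    (2171*b^2 - 1171*a*b - 377*a^2) *
      (b^12 - 12*a*b^11 + 54*a^2*b^10 - 128*a^3*b^9 + 189*a^4*b^8 - 180*a^5*b^7
      + 114*a^6*b^6 - 36*a^7*b^5 - 18*a^8*b^4 + 28*a^9*b^3 - 12*a^10*b^2 + a^12)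
    + (-2162*b^11 + 14251*a*b^10 - 38917*a^2*b^9 + 62505*a^3*b^8 - 62319*a^4*b^7
      + 41331*a^5*b^6 - 14583*a^6*b^5 - 5382*a^7*b^4 + 10026*a^8*b^3 - 4553*a^9*b^2
      + 40*a^10*b + 377*a^11) * (a^3 + 3*a^2*b - 6*a*b^2 + b^3)
    = 9 * b^14 := by ring

lemma dec2 : ∀ x y : ZMod 2,
    (x^2 - x*y + y^2 = 0 ∨ x^3 + 3*x^2*y - 6*x*y^2 + y^3 = 0) → x = 0 ∧ y = 0 := by decide

lemma dec5 : ∀ x y : ZMod 5,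
    (x^2 - x*y + y^2 = 0 ∨ x^3 + 3*x^2*y - 6*x*y^2 + y^3 = 0) → x = 0 ∧ y = 0 := by decide

lemma dec3 : ∀ x y : ZMod 3,
    (x^2 - x*y + y^2 = 0 ∨ x^3 + 3*x^2*y - 6*x*y^2 + y^3 = 0) →
    (x = 0 ∧ y = 0) ∨
    y^12 - 12*x*y^11 + 54*x^2*y^10 - 128*x^3*y^9 + 189*x^4*y^8 - 180*x^5*y^7
      + 114*x^6*y^6 - 36*x^7*y^5 - 18*x^8*y^4 + 28*x^9*y^3 - 12*x^10*y^2 + x^12 = 0 := by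
  decide

theorem stmt_2 (a b : ℤ) (hab : IsCoprime a b) (p : ℕ) (hp : p.Prime) :
    ((p : ℤ) ∣ (EC9 a b).Δ ∧ ¬ (p : ℤ) ∣ (EC9 a b).c₄) ↔
      ((p : ℤ) ∣ a * b * (a - b) ∨
        (7 ≤ p ∧ (p : ℤ) ∣
          (a ^ 2 - a * b + b ^ 2) * (a ^ 3 + 3 * a ^ 2 * b - 6 * a * b ^ 2 + b ^ 3))) := by
  haveI : Fact p.Prime := ⟨hp⟩
  have hpZ : Prime (p : ℤ) := Nat.prime_iff_prime_int.mp hp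
  have notboth : ¬ ((p : ℤ) ∣ a ∧ (p : ℤ) ∣ b) := by
    rintro ⟨ha, hb⟩
    exact hpZ.not_unit (hab.isUnit_of_dvd' ha hb)
  -- for p ≥ 7, p ∣ F4 or p ∣ F5 implies p ∤ c₄
  have key7 : 7 ≤ p → ((p : ℤ) ∣ (a^2 - a*b + b^2) ∨
      (p : ℤ) ∣ (a^3 + 3*a^2*b - 6*a*b^2 + b^3)) → ¬ (p : ℤ) ∣ (EC9 a b).c₄ := by
    intro h7 hF hc
    rw [EC9_c4] at hc
    have hp3 : ¬ (p : ℤ) ∣ 9 := by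
      intro h9
      have h3 : (p : ℤ) ∣ 3 := by
        have : (p : ℤ) ∣ (3:ℤ)^2 := by norm_num at h9 ⊢; exact h9
        exact hpZ.dvd_of_dvd_pow this
      have : p ∣ 3 := by exact_mod_cast h3
      have := Nat.le_of_dvd (by norm_num) this
      omega
    have hb : (p : ℤ) ∣ b := by
      rcases hF with h4 | h5
      · have h913 : (p : ℤ) ∣ 9 * b^13 := by
          rw [← bez4 a b]
          exact dvd_add (hc.mul_left _) (h4.mul_left _)
        rcases hpZ.dvd_mul.mp h913 with h | h
        · exact absurd h hp3
        · exact hpZ.dvd_of_dvd_pow h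
      · have h914 : (p : ℤ) ∣ 9 * b^14 := by
          rw [← bez5 a b]
          exact dvd_add (hc.mul_left _) (h5.mul_left _)
        rcases hpZ.dvd_mul.mp h914 with h | h
        · exact absurd h hp3
        · exact hpZ.dvd_of_dvd_pow h
    have ha : (p : ℤ) ∣ a := by
      rcases hF with h4 | h5
      · have : (p : ℤ) ∣ a^2 := by
          have hEq : a^2 = (a^2 - a*b + b^2) + b*(a - b) := by ring
          rw [hEq]; exact dvd_add h4 (hb.mul_right _)
        exact hpZ.dvd_of_dvd_pow this
      · have : (p : ℤ) ∣ a^3 := by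
          have hEq : a^3 = (a^3 + 3*a^2*b - 6*a*b^2 + b^3) + b*(-3*a^2 + 6*a*b - b^2) := by
            ring
          rw [hEq]; exact dvd_add h5 (hb.mul_right _)
        exact hpZ.dvd_of_dvd_pow this
    exact notboth ⟨ha, hb⟩
  -- if p ∣ a*b*(a-b) then p ∤ c₄
  have keyab : (p : ℤ) ∣ a * b * (a - b) → ¬ (p : ℤ) ∣ (EC9 a b).c₄ := by
    intro h hc
    have hc0 : (((EC9 a b).c₄ : ℤ) : ZMod p) = 0 :=
      (ZMod.intCast_zmod_eq_zero_iff_dvd _ p).mpr hc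
    rcases hpZ.dvd_mul.mp h with h' | hd
    · rcases hpZ.dvd_mul.mp h' with ha | hb
      · -- p ∣ a, so c₄ ≡ b^12 and p ∤ b
        have hnb : ¬ (p : ℤ) ∣ b := fun hb => notboth ⟨ha, hb⟩
        have hx : ((a : ℤ) : ZMod p) = 0 := (ZMod.intCast_zmod_eq_zero_iff_dvd a p).mpr ha
        have key : (((EC9 a b).c₄ : ℤ) : ZMod p) = ((b : ℤ) : ZMod p)^12 := by
          rw [EC9_c4]; push_cast; rw [hx]; ring
        rw [key] at hc0
        have : ((b : ℤ) : ZMod p) = 0 := by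
          exact pow_eq_zero_iff (n := 12) (by norm_num) |>.mp hc0
        exact hnb ((ZMod.intCast_zmod_eq_zero_iff_dvd b p).mp this)
      · -- p ∣ b, so c₄ ≡ a^12 and p ∤ a
        have hna : ¬ (p : ℤ) ∣ a := fun ha => notboth ⟨ha, hb⟩
        have hx : ((b : ℤ) : ZMod p) = 0 := (ZMod.intCast_zmod_eq_zero_iff_dvd b p).mpr hb
        have key : (((EC9 a b).c₄ : ℤ) : ZMod p) = ((a : ℤ) : ZMod p)^12 := by
          rw [EC9_c4]; push_cast; rw [hx]; ring
        rw [key] at hc0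
        have : ((a : ℤ) : ZMod p) = 0 := by
          exact pow_eq_zero_iff (n := 12) (by norm_num) |>.mp hc0
        exact hna ((ZMod.intCast_zmod_eq_zero_iff_dvd a p).mp this)
    · -- p ∣ a - b
      have hnb : ¬ (p : ℤ) ∣ b := by
        intro hb
        have ha : (p : ℤ) ∣ a := by
          have : a = (a - b) + b := by ring
          rw [this]; exact dvd_add hd hb
        exact notboth ⟨ha, hb⟩
      have hx : ((a : ℤ) : ZMod p) = ((b : ℤ) : ZMod p) := by
        have h0 : (((a - b : ℤ)) : ZMod p) = 0 := (ZMod.intCast_zmod_eq_zero_iff_dvd _ p).mpr hd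
        push_cast at h0
        exact sub_eq_zero.mp h0
      have key : (((EC9 a b).c₄ : ℤ) : ZMod p) = ((b : ℤ) : ZMod p)^12 := by
        rw [EC9_c4]; push_cast; rw [hx]; ring
      rw [key] at hc0
      have : ((b : ℤ) : ZMod p) = 0 := by
        exact pow_eq_zero_iff (n := 12) (by norm_num) |>.mp hc0
      exact hnb ((ZMod.intCast_zmod_eq_zero_iff_dvd b p).mp this)
  constructor
  · rintro ⟨hΔd, hc4d⟩
    rw [EC9_Δ] at hΔd
    have hcases : (p : ℤ) ∣ a * b * (a - b) ∨
        ((p : ℤ) ∣ (a^2 - a*b + b^2) ∨ (p : ℤ) ∣ (a^3 + 3*a^2*b - 6*a*b^2 + b^3)) := by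
      rcases hpZ.dvd_mul.mp hΔd with h1 | h5
      · rcases hpZ.dvd_mul.mp h1 with h2 | h4
        · left
          have : (p : ℤ) ∣ (a * b * (a - b))^9 := (dvd_neg.mp h2)
          exact hpZ.dvd_of_dvd_pow this
        · right; left; exact hpZ.dvd_of_dvd_pow h4
      · right; right; exact h5
    rcases hcases with h | hF
    · exact Or.inl h
    · right
      have h7 : 7 ≤ p := by
        by_contra h7
        push_neg at h7
        have hab0 : ¬ (((a : ℤ) : ZMod p) = 0 ∧ ((b : ℤ) : ZMod p) = 0) := by
          rintro ⟨hx, hy⟩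
          exact notboth ⟨(ZMod.intCast_zmod_eq_zero_iff_dvd a p).mp hx,
            (ZMod.intCast_zmod_eq_zero_iff_dvd b p).mp hy⟩
        have hF' : (((a : ℤ) : ZMod p)^2 - ((a : ℤ) : ZMod p)*((b : ℤ) : ZMod p)
              + ((b : ℤ) : ZMod p)^2 = 0) ∨
            (((a : ℤ) : ZMod p)^3 + 3*((a : ℤ) : ZMod p)^2*((b : ℤ) : ZMod p)
              - 6*((a : ℤ) : ZMod p)*((b : ℤ) : ZMod p)^2 + ((b : ℤ) : ZMod p)^3 = 0) := by
          rcases hF with h | h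
          · left
            have h0 := (ZMod.intCast_zmod_eq_zero_iff_dvd _ p).mpr h
            push_cast at h0; linear_combination h0
          · right
            have h0 := (ZMod.intCast_zmod_eq_zero_iff_dvd _ p).mpr h
            push_cast at h0; linear_combination h0
        have hc4' : ¬ (((b : ℤ) : ZMod p)^12 - 12*((a : ℤ) : ZMod p)*((b : ℤ) : ZMod p)^11
            + 54*((a : ℤ) : ZMod p)^2*((b : ℤ) : ZMod p)^10
            - 128*((a : ℤ) : ZMod p)^3*((b : ℤ) : ZMod p)^9
            + 189*((a : ℤ) : ZMod p)^4*((b : ℤ) : ZMod p)^8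
            - 180*((a : ℤ) : ZMod p)^5*((b : ℤ) : ZMod p)^7
            + 114*((a : ℤ) : ZMod p)^6*((b : ℤ) : ZMod p)^6
            - 36*((a : ℤ) : ZMod p)^7*((b : ℤ) : ZMod p)^5
            - 18*((a : ℤ) : ZMod p)^8*((b : ℤ) : ZMod p)^4
            + 28*((a : ℤ) : ZMod p)^9*((b : ℤ) : ZMod p)^3
            - 12*((a : ℤ) : ZMod p)^10*((b : ℤ) : ZMod p)^2
            + ((a : ℤ) : ZMod p)^12 = 0) := by
          intro h0
          apply hc4d
          rw [EC9_c4]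
          rw [← ZMod.intCast_zmod_eq_zero_iff_dvd]
          push_cast
          linear_combination h0
        interval_cases p
        · exact absurd hp (by norm_num)
        · exact absurd hp (by norm_num)
        · exact hab0 (dec2 _ _ hF')
        · rcases dec3 _ _ hF' with h | h
          · exact hab0 h
          · exact hc4' h
        · exact absurd hp (by norm_num)
        · exact hab0 (dec5 _ _ hF')
        · exact absurd hp (by norm_num)
      refine ⟨h7, ?_⟩
      rcases hF with h | h
      · exact h.mul_right _
      · exact h.mul_left _
  · rintro (h | ⟨h7, hdvd⟩)
    · refine ⟨?_, keyab h⟩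
      rw [EC9_Δ]
      exact (((dvd_pow h (by norm_num)).neg_right).mul_right _).mul_right _
    · have hF : (p : ℤ) ∣ (a^2 - a*b + b^2) ∨
          (p : ℤ) ∣ (a^3 + 3*a^2*b - 6*a*b^2 + b^3) := hpZ.dvd_mul.mp hdvd
      refine ⟨?_, key7 h7 hF⟩
      rw [EC9_Δ]
      rcases hF with h | h
      · exact dvd_mul_of_dvd_left (dvd_mul_of_dvd_right (dvd_pow h (by norm_num)) _) _
      · exact dvd_mul_of_dvd_right h _
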